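/- arXiv:1504.06288 — 3 statements merged into one kernel-verified Lean document; each statement's English description precedes it below -/
import Mathlib

section
/- Suppose V_i ⊆ V, W_j ⊆ W, μ, ν are finitely additive probability measures on Boolean algebras of subsets of V, W respectively, ε > 0, δ = √(2ε), and the pair (V_i, W_j) satisfies: for all a ∈ V_i outside a set of μ-measure ≤ ε·μ(V_i), for all b ∈ W_j outside a set of ν-measure ≤ ε·ν(W_j), R(a,b) holds. Then for any measurable A ⊆ V_i and B ⊆ W_j with μ(A) ≥ δ·μ(V_i) and ν(B) ≥ δ·ν(W_j): for all a ∈ A outside a set of μ-measure ≤ δ·μ(A), for all b ∈ B outside a set of ν-measure ≤ δ·ν(B), R(a,b) holds. -/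
/-- A finitely additive probability measure on a Boolean algebra of subsets of `V`. -/
structure FinAddProb (V : Type*) where
  sets : Set (Set V)
  univ_mem : Set.univ ∈ sets
  compl_mem : ∀ A ∈ sets, Aᶜ ∈ sets
  union_mem : ∀ A ∈ sets, ∀ B ∈ sets, A ∪ B ∈ sets
  μ : Set V → ℝ
  nonneg : ∀ A, 0 ≤ μ A
  measure_univ : μ Set.univ = 1
  measure_empty : μ ∅ = 0
  additive : ∀ A ∈ sets, ∀ B ∈ sets, Disjoint A B → μ (A ∪ B) = μ A + μ B

/-- From ε-goodness of the pair `(V_i, W_j)` (case (i) of the regularity theorem)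
we get δ-regularity with `δ = √(2ε)` for large definable `A ⊆ V_i`, `B ⊆ W_j`. -/
theorem delta_regularity {V W : Type*} (R : V → W → Prop)
    (M : FinAddProb V) (N : FinAddProb W)
    (Vi : Set V) (Wj : Set W) (hVi : Vi ∈ M.sets) (hWj : Wj ∈ N.sets)
    (ε δ : ℝ) (hε : 0 < ε) (hδ : δ = Real.sqrt (2 * ε))
    (hgood : ∃ E ∈ M.sets, M.μ E ≤ ε * M.μ Vi ∧
      ∀ a ∈ Vi \ E, ∃ F ∈ N.sets, N.μ F ≤ ε * N.μ Wj ∧ ∀ b ∈ Wj \ F, R a b)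
    (A : Set V) (B : Set W) (hA : A ∈ M.sets) (hB : B ∈ N.sets)
    (hAVi : A ⊆ Vi) (hBWj : B ⊆ Wj)
    (hAbig : δ * M.μ Vi ≤ M.μ A) (hBbig : δ * N.μ Wj ≤ N.μ B) :
    ∃ E ∈ M.sets, M.μ E ≤ δ * M.μ A ∧
      ∀ a ∈ A \ E, ∃ F ∈ N.sets, N.μ F ≤ δ * N.μ B ∧ ∀ b ∈ B \ F, R a b := by
  obtain ⟨E, hE, hEle, hEprop⟩ := hgood
  have hδ0 : 0 ≤ δ := hδ ▸ Real.sqrt_nonneg _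
  have hδ2 : δ ^ 2 = 2 * ε := by
    rw [hδ, Real.sq_sqrt (by linarith)]
  refine ⟨E, hE, ?_, ?_⟩
  · nlinarith [M.nonneg Vi, M.nonneg E]
  · intro a ha
    obtain ⟨F, hF, hFle, hFprop⟩ := hEprop a ⟨hAVi ha.1, ha.2⟩
    refine ⟨F, hF, ?_, fun b hb => hFprop b ⟨hBWj hb.1, hb.2⟩⟩
    nlinarith [N.nonneg Wj, N.nonneg F]
end

section
/- Let R ⊆ V × W have no k-order property and let p be an ultrafilter on the Boolean algebra of subsets of V generated by all fibers R(·,b), b ∈ W. Then the set D_p := { b ∈ W : R(·,b) ∈ p } is itself a boolean combination of 'dual fibers' R(a,·) = { b : R(a,b) } for finitely many a ∈ V. (Definability of Δ-types for a stable relation.) -/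
/-- `R` has the `k`-order property. -/
def OrderProperty {V W : Type*} (R : V → W → Prop) (k : ℕ) : Prop :=
  ∃ (a : Fin k → V) (b : Fin k → W), ∀ i j, R (a i) (b j) ↔ i ≤ j

/-- The fiber `R(·,b) = {a : R a b}`. -/
def Fiber {V W : Type*} (R : V → W → Prop) (b : W) : Set V := {a | R a b}

/-- The Boolean algebra of sets generated by a collection `S` of subsets of `V`. -/
inductive GenAlg {V : Type*} (S : Set (Set V)) : Set V → Prop
  | basic : ∀ A ∈ S, GenAlg S A
  | univ : GenAlg S Set.univ
  | compl : ∀ A, GenAlg S A → GenAlg S Aᶜ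
  | union : ∀ A B, GenAlg S A → GenAlg S B → GenAlg S (A ∪ B)

section AuxAlg

variable {V : Type*} {S : Set (Set V)}

lemma genAlg_inter {A B : Set V} (hA : GenAlg S A) (hB : GenAlg S B) :
    GenAlg S (A ∩ B) := by
  have h : A ∩ B = (Aᶜ ∪ Bᶜ)ᶜ := by rw [Set.compl_union, compl_compl, compl_compl]
  rw [h]
  exact GenAlg.compl _ (GenAlg.union _ _ (GenAlg.compl _ hA) (GenAlg.compl _ hB))

lemma genAlg_empty : GenAlg S (∅ : Set V) := by
  rw [← Set.compl_univ]; exact GenAlg.compl _ GenAlg.univ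

lemma genAlg_biUnion {ι : Type*} (F : Finset ι) (f : ι → Set V)
    (h : ∀ i ∈ F, GenAlg S (f i)) : GenAlg S (⋃ i ∈ F, f i) := by
  classical
  revert h
  induction F using Finset.induction with
  | empty => intro _; simpa using (genAlg_empty : GenAlg S (∅ : Set V))
  | insert _ _ ha ih =>
    intro h
    rw [Finset.set_biUnion_insert]
    exact GenAlg.union _ _ (h _ (Finset.mem_insert_self _ _))
      (ih fun i hi => h i (Finset.mem_insert_of_mem hi))

lemma genAlg_biInter {ι : Type*} (F : Finset ι) (f : ι → Set V)
    (h : ∀ i ∈ F, GenAlg S (f i)) : GenAlg S (⋂ i ∈ F, f i) := by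
  classical
  revert h
  induction F using Finset.induction with
  | empty => intro _; simpa using (GenAlg.univ : GenAlg S Set.univ)
  | insert _ _ ha ih =>
    intro h
    rw [Finset.set_biInter_insert]
    exact genAlg_inter (h _ (Finset.mem_insert_self _ _))
      (ih fun i hi => h i (Finset.mem_insert_of_mem hi))

end AuxAlg

/-- If membership in `X` only depends on the coordinates `R a ·` for `a ∈ F`,
then `X` is in the algebra generated by the dual fibers. -/
lemma genAlg_finset_inv {V W : Type*} (R : V → W → Prop) (F : Finset V) (X : Set W)
    (hX : ∀ b b', (∀ a ∈ F, (R a b ↔ R a b')) → (b ∈ X ↔ b' ∈ X)) :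
    GenAlg {S : Set W | ∃ a : V, S = {b | R a b}} X := by
  classical
  have hrepr : X = ⋃ G ∈ F.powerset.filter
      (fun G => ∃ b, b ∈ X ∧ ∀ a ∈ F, (R a b ↔ a ∈ G)),
      ⋂ a ∈ F, {b | R a b ↔ a ∈ G} := by
    ext b
    simp only [Set.mem_iUnion, Finset.mem_filter, Finset.mem_powerset, Set.mem_iInter,
      Set.mem_setOf_eq, exists_prop]
    constructor
    · intro hb
      refine ⟨F.filter (fun a => R a b), ⟨⟨Finset.filter_subset _ _, b, hb, ?_⟩, ?_⟩⟩
      · intro a ha; simp [Finset.mem_filter, ha]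
      · intro a ha; simp [Finset.mem_filter, ha]
    · rintro ⟨G, ⟨-, b₀, hb₀, hpat⟩, hmem⟩
      exact (hX b₀ b (fun a ha => (hpat a ha).trans ((hmem a ha).symm))).mp hb₀
  rw [hrepr]
  refine genAlg_biUnion _ _ (fun G _ => genAlg_biInter _ _ (fun a _ => ?_))
  by_cases haG : a ∈ G
  · have h : {b | R a b ↔ a ∈ G} = {b | R a b} := by ext b; simp [haG]
    rw [h]; exact GenAlg.basic _ ⟨a, rfl⟩
  · have h : {b | R a b ↔ a ∈ G} = {b | R a b}ᶜ := by ext b; simp [haG]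
    rw [h]; exact GenAlg.compl _ (GenAlg.basic _ ⟨a, rfl⟩)

/-- Infinite Ramsey theorem for pairs with two colours. -/
theorem ramsey_pairs (r : ℕ → ℕ → Prop) :
    ∃ f : ℕ → ℕ, StrictMono f ∧
      ((∀ i j, i < j → r (f i) (f j)) ∨ (∀ i j, i < j → ¬ r (f i) (f j))) := by
  classical
  have hstep : ∀ s : Set ℕ, s.Infinite → ∃ t : Set ℕ, t.Infinite ∧
      t ⊆ s ∧ (∀ y ∈ t, sInf s < y) ∧
      ((∀ y ∈ t, r (sInf s) y) ∨ (∀ y ∈ t, ¬ r (sInf s) y)) := by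
    intro s hs
    set x := sInf s with hx
    have h1 : {y ∈ s | x < y}.Infinite := by
      refine (hs.diff (Set.finite_Iic x)).mono ?_
      intro y hy
      have h2 := hy.2
      rw [Set.mem_Iic] at h2
      exact ⟨hy.1, not_le.mp h2⟩
    by_cases h2 : {y ∈ s | x < y ∧ r x y}.Infinite
    · exact ⟨_, h2, fun y hy => hy.1, fun y hy => hy.2.1, Or.inl fun y hy => hy.2.2⟩
    · have h3 : {y ∈ s | x < y ∧ ¬ r x y}.Infinite := by
        rw [Set.not_infinite] at h2
        by_contra h3
        rw [Set.not_infinite] at h3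
        refine h1 ((h2.union h3).subset ?_)
        intro y hy
        by_cases hr : r x y
        · exact Or.inl ⟨hy.1, hy.2, hr⟩
        · exact Or.inr ⟨hy.1, hy.2, hr⟩
      exact ⟨_, h3, fun y hy => hy.1, fun y hy => hy.2.1, Or.inr fun y hy => hy.2.2⟩
  choose step hinf hsubs hgt hcol using hstep
  let S : ℕ → {s : Set ℕ // s.Infinite} := fun n =>
    Nat.rec ⟨Set.univ, Set.infinite_univ⟩ (fun _ ih => ⟨step ih.1 ih.2, hinf ih.1 ih.2⟩) n
  let x : ℕ → ℕ := fun n => sInf (S n).1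
  have hsub' : ∀ n, (S (n+1)).1 ⊆ (S n).1 := fun n => hsubs (S n).1 (S n).2
  have hchain : ∀ i j, i ≤ j → (S j).1 ⊆ (S i).1 := by
    intro i j h
    induction j, h using Nat.le_induction with
    | base => exact subset_rfl
    | succ j hij ih => exact (hsub' j).trans ih
  have hxmem : ∀ n, x n ∈ (S n).1 := fun n => Nat.sInf_mem (S n).2.nonempty
  have hxlt : ∀ n, ∀ y ∈ (S (n+1)).1, x n < y := fun n => hgt (S n).1 (S n).2
  have hxmono : StrictMono x := strictMono_nat_of_lt_succ (fun n => hxlt n _ (hxmem (n+1)))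
  have hdich : ∀ n, (∀ y ∈ (S (n+1)).1, r (x n) y) ∨ (∀ y ∈ (S (n+1)).1, ¬ r (x n) y) :=
    fun n => hcol (S n).1 (S n).2
  by_cases hP : {n | ∀ y ∈ (S (n+1)).1, r (x n) y}.Infinite
  · refine ⟨fun n => x (Nat.nth (fun m => ∀ y ∈ (S (m+1)).1, r (x m) y) n),
      hxmono.comp (Nat.nth_strictMono hP), Or.inl ?_⟩
    intro i j hij
    have h1 := Nat.nth_strictMono hP hij
    have h2 := Nat.nth_mem_of_infinite hP i
    exact h2 _ (hchain _ _ h1 (hxmem _))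
  · have hPc : {n | ¬ ∀ y ∈ (S (n+1)).1, r (x n) y}.Infinite := by
      rw [Set.not_infinite] at hP
      have h := hP.infinite_compl
      simpa [Set.compl_setOf] using h
    refine ⟨fun n => x (Nat.nth (fun m => ¬ ∀ y ∈ (S (m+1)).1, r (x m) y) n),
      hxmono.comp (Nat.nth_strictMono hPc), Or.inr ?_⟩
    intro i j hij
    have h1 := Nat.nth_strictMono hPc hij
    have h2 := Nat.nth_mem_of_infinite hPc i
    have h3 := (hdich _).resolve_left h2
    exact h3 _ (hchain _ _ h1 (hxmem _))

/-- History of iterated picking. -/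
noncomputable def histAux {α : Type*} (pick : List α → α) : ℕ → List α
  | 0 => []
  | n+1 => histAux pick n ++ [pick (histAux pick n)]

lemma histAux_eq {α : Type*} (pick : List α → α) (n : ℕ) :
    histAux pick n = (List.range n).map (fun j => pick (histAux pick j)) := by
  induction n with
  | zero => simp [histAux]
  | succ n ih => rw [histAux, List.range_succ, List.map_append, ← ih]; simp

lemma histAux_length {α : Type*} (pick : List α → α) (n : ℕ) :
    (histAux pick n).length = n := by
  rw [histAux_eq]; simp

lemma histAux_take {α : Type*} (pick : List α → α) {n m : ℕ} (h : n ≤ m) :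
    (histAux pick m).take n = histAux pick n := by
  rw [histAux_eq pick m, histAux_eq pick n, ← List.map_take, List.take_range,
    min_eq_left h]

/-- Definability of Δ-types: if `R` has no `k`-order property and `p` is an
ultrafilter on the algebra generated by the fibers `R(·,b)`, then
`D_p = {b : R(·,b) ∈ p}` is a boolean combination of dual fibers `R(a,·)`. -/
theorem definability_of_types {V W : Type*} (R : V → W → Prop) (k : ℕ)
    (hstable : ¬ OrderProperty R k)
    (p : Set (Set V))
    (hsub : ∀ A ∈ p, GenAlg {S | ∃ b : W, S = Fiber R b} A)
    (hUF : ∀ A, GenAlg {S | ∃ b : W, S = Fiber R b} A → (A ∈ p ↔ Aᶜ ∉ p))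
    (hInter : ∀ A ∈ p, ∀ B ∈ p, A ∩ B ∈ p)
    (hSuper : ∀ A ∈ p, ∀ B, GenAlg {S | ∃ b : W, S = Fiber R b} B → A ⊆ B → B ∈ p) :
    GenAlg {S : Set W | ∃ a : V, S = {b | R a b}} {b | Fiber R b ∈ p} := by
  classical
  by_contra hcon
  -- basic ultrafilter facts
  have hnotempty : (∅ : Set V) ∉ p := by
    intro h0
    have huniv : Set.univ ∈ p := hSuper ∅ h0 Set.univ GenAlg.univ (Set.empty_subset _)
    have h1 := (hUF Set.univ GenAlg.univ).mp huniv
    rw [Set.compl_univ] at h1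
    exact h1 h0
  have huniv : Set.univ ∈ p := by
    have h1 := hUF Set.univ GenAlg.univ
    rw [Set.compl_univ] at h1
    exact h1.mpr hnotempty
  have hmem_ne : ∀ A ∈ p, A.Nonempty := by
    intro A hA
    rcases Set.eq_empty_or_nonempty A with h | h
    · exact absurd (h ▸ hA) hnotempty
    · exact h
  have hVne : Nonempty V := Set.nonempty_iff_univ_nonempty.mpr (hmem_ne _ huniv)
  have hcompl : ∀ b : W, Fiber R b ∉ p → (Fiber R b)ᶜ ∈ p := by
    intro b hb
    have h1 := hUF (Fiber R b)ᶜ (GenAlg.compl _ (GenAlg.basic _ ⟨b, rfl⟩))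
    rw [compl_compl] at h1
    exact h1.mpr hb
  -- from ¬definability, get bad pairs over any finite set
  have hbad : ∀ F : Finset V, ∃ bb : W × W,
      (∀ a ∈ F, (R a bb.1 ↔ R a bb.2)) ∧ Fiber R bb.1 ∈ p ∧ Fiber R bb.2 ∉ p := by
    intro F
    by_contra hF
    push_neg at hF
    apply hcon
    apply genAlg_finset_inv R F
    intro b b' hag
    constructor
    · intro hb; exact hF (b, b') hag hb
    · intro hb'; exact hF (b', b) (fun a ha => (hag a ha).symm) hb'
  -- the set of a's correct on a list of pairs is in p
  have hAset : ∀ l : List (W × W), (∀ bb ∈ l, Fiber R bb.1 ∈ p ∧ Fiber R bb.2 ∉ p) →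
      {a | ∀ bb ∈ l, R a bb.1 ∧ ¬ R a bb.2} ∈ p := by
    intro l
    induction l with
    | nil =>
      intro _
      have h : {a : V | ∀ bb ∈ ([] : List (W × W)), R a bb.1 ∧ ¬ R a bb.2} = Set.univ := by
        ext a; simp
      rw [h]; exact huniv
    | cons bb l ih =>
      intro h
      have h1 : Fiber R bb.1 ∈ p := (h bb (List.mem_cons_self)).1
      have h2 : (Fiber R bb.2)ᶜ ∈ p := hcompl _ (h bb (List.mem_cons_self)).2
      have h3 := ih (fun x hx => h x (List.mem_cons_of_mem _ hx))
      have heq : {a | ∀ cc ∈ bb :: l, R a cc.1 ∧ ¬ R a cc.2}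
          = (Fiber R bb.1 ∩ (Fiber R bb.2)ᶜ) ∩ {a | ∀ cc ∈ l, R a cc.1 ∧ ¬ R a cc.2} := by
        ext a
        simp [Fiber, List.forall_mem_cons, and_assoc]
      rw [heq]
      exact hInter _ (hInter _ h1 _ h2) _ h3
  have hApick : ∀ l : List (W × W), (∀ bb ∈ l, Fiber R bb.1 ∈ p ∧ Fiber R bb.2 ∉ p) →
      ∃ a, ∀ bb ∈ l, R a bb.1 ∧ ¬ R a bb.2 := by
    intro l h
    obtain ⟨a, ha⟩ := hmem_ne _ (hAset l h)
    exact ⟨a, ha⟩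
  -- the recursive construction
  let pickA : List (W × W) → V := fun l =>
    if h : ∃ a, ∀ bb ∈ l, R a bb.1 ∧ ¬ R a bb.2 then h.choose else Classical.choice hVne
  let Fb : List (W × W) → Finset V :=
    fun l => ((List.range l.length).map (fun j => pickA (l.take (j+1)))).toFinset
  let pick : List (W × W) → W × W := fun l => (hbad (Fb l)).choose
  let bp : ℕ → W × W := fun n => pick (histAux pick n)
  let aa : ℕ → V := fun n => pickA (histAux pick (n+1))
  have hhist_eq : ∀ n, histAux pick n = (List.range n).map bp := fun n => histAux_eq pick n
  have hbp_mem : ∀ j n, j < n → bp j ∈ histAux pick n := by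
    intro j n hj
    rw [hhist_eq n]
    exact List.mem_map_of_mem (List.mem_range.mpr hj)
  have hI1 : ∀ n, (∀ y ∈ Fb (histAux pick n), (R y (bp n).1 ↔ R y (bp n).2)) ∧
      Fiber R (bp n).1 ∈ p ∧ Fiber R (bp n).2 ∉ p :=
    fun n => (hbad (Fb (histAux pick n))).choose_spec
  have hI1' : ∀ n, ∀ bb ∈ histAux pick n, Fiber R bb.1 ∈ p ∧ Fiber R bb.2 ∉ p := by
    intro n bb hbb
    rw [hhist_eq n] at hbb
    obtain ⟨j, _, rfl⟩ := List.mem_map.mp hbb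
    exact ⟨(hI1 j).2.1, (hI1 j).2.2⟩
  have hcondA : ∀ n, ∃ a, ∀ bb ∈ histAux pick n, R a bb.1 ∧ ¬ R a bb.2 :=
    fun n => hApick _ (hI1' n)
  have hI2 : ∀ n, ∀ bb ∈ histAux pick (n+1), R (aa n) bb.1 ∧ ¬ R (aa n) bb.2 := by
    intro n
    have hc := hcondA (n+1)
    have he : aa n = hc.choose := by
      show pickA (histAux pick (n+1)) = hc.choose
      show (if h : ∃ a, ∀ bb ∈ histAux pick (n+1), R a bb.1 ∧ ¬ R a bb.2
        then h.choose else Classical.choice hVne) = hc.choose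
      rw [dif_pos hc]
    rw [he]
    exact hc.choose_spec
  have hI3 : ∀ n m, n < m → (R (aa n) (bp m).1 ↔ R (aa n) (bp m).2) := by
    intro n m hnm
    have hmem : aa n ∈ Fb (histAux pick m) := by
      show aa n ∈ ((List.range (histAux pick m).length).map
        (fun j => pickA ((histAux pick m).take (j+1)))).toFinset
      rw [histAux_length]
      apply List.mem_toFinset.mpr
      have h1 : pickA ((histAux pick m).take (n+1)) ∈
          (List.range m).map (fun j => pickA ((histAux pick m).take (j+1))) :=
        List.mem_map_of_mem (List.mem_range.mpr hnm)
      rwa [histAux_take pick hnm] at h1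
    exact (hI1 m).1 _ hmem
  -- Ramsey
  obtain ⟨f, hf, hcases⟩ := ramsey_pairs (fun n m => R (aa n) (bp m).1)
  apply hstable
  rcases hcases with hc | hc
  · -- monochromatic true: use the b' coordinates
    refine ⟨fun i => aa (f i), fun j => (bp (f ((j : ℕ) + 1))).2, ?_⟩
    intro i j
    constructor
    · intro hR
      by_contra hij
      have hji : (j : ℕ) < (i : ℕ) := Fin.lt_def.mp (Fin.not_le.mp hij)
      have hle : f ((j : ℕ) + 1) ≤ f (i : ℕ) := hf.monotone hji
      have hmem : bp (f ((j : ℕ) + 1)) ∈ histAux pick (f (i : ℕ) + 1) :=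
        hbp_mem _ _ (by omega)
      exact (hI2 (f i) _ hmem).2 hR
    · intro hij
      have h1 : f (i : ℕ) < f ((j : ℕ) + 1) := hf (Nat.lt_succ_of_le hij)
      have h2 : R (aa (f i)) (bp (f ((j : ℕ) + 1))).1 := hc _ _ (Nat.lt_succ_of_le hij)
      exact (hI3 _ _ h1).mp h2
  · -- monochromatic false: use the b coordinates, reversed
    refine ⟨fun i => aa (f (k - 1 - (i : ℕ))), fun j => (bp (f (k - 1 - (j : ℕ)))).1, ?_⟩
    intro i j
    constructor
    · intro hR
      by_contra hij
      have hji : (j : ℕ) < (i : ℕ) := Fin.lt_def.mp (Fin.not_le.mp hij)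
      have h1 : k - 1 - (i : ℕ) < k - 1 - (j : ℕ) := by
        have hi := i.isLt; omega
      exact hc _ _ h1 hR
    · intro hij
      have h1 : k - 1 - (j : ℕ) ≤ k - 1 - (i : ℕ) := by
        have := Fin.le_def.mp hij; omega
      have hle : f (k - 1 - (j : ℕ)) ≤ f (k - 1 - (i : ℕ)) := hf.monotone h1
      have hmem : bp (f (k - 1 - (j : ℕ))) ∈ histAux pick (f (k - 1 - (i : ℕ)) + 1) :=
        hbp_mem _ _ (by omega)
      exact (hI2 _ _ hmem).1
end

section
/- Symmetry of definitions (finite combinatorial harmonic pair): let R ⊆ V × W have no k-order property, p an ultrafilter on the fiber algebra over V with defining set D_p = { b : R(·,b) ∈ p }, and q an ultrafilter on the dual fiber algebra over W with defining set D_q = { a : R(a,·) ∈ q }. If D_p ∈ q then D_q ∈ p, where membership D_p ∈ q means q contains the set D_p (assumed to lie in the dual algebra by definability). -/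
section Helpers
variable {V : Type*} {G : Set V → Prop} {p : Set (Set V)}

lemma uf_nonempty
    (hsub : ∀ A ∈ p, G A)
    (hUF : ∀ A, G A → (A ∈ p ↔ Aᶜ ∉ p))
    (hSuper : ∀ A ∈ p, ∀ B, G B → A ⊆ B → B ∈ p)
    (hcompl : ∀ A, G A → G Aᶜ)
    {A : Set V} (hA : A ∈ p) : A.Nonempty := by
  by_contra hne
  rw [Set.not_nonempty_iff_eq_empty] at hne
  have hGA := hsub A hA
  have h1 : Aᶜ ∉ p := (hUF A hGA).mp hA
  have h2 : Aᶜ ∈ p := hSuper A hA Aᶜ (hcompl A hGA) (by simp [hne])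
  exact h1 h2

lemma uf_univ
    (hsub : ∀ A ∈ p, G A)
    (hUF : ∀ A, G A → (A ∈ p ↔ Aᶜ ∉ p))
    (hSuper : ∀ A ∈ p, ∀ B, G B → A ⊆ B → B ∈ p)
    (hcompl : ∀ A, G A → G Aᶜ) (huniv : G Set.univ) :
    (Set.univ : Set V) ∈ p := by
  by_contra hn
  have : (Set.univ : Set V)ᶜ ∈ p := by
    by_contra hn2
    exact hn ((hUF _ huniv).mpr hn2)
  rw [Set.compl_univ] at this
  exact absurd (uf_nonempty hsub hUF hSuper hcompl this) (by simp)

lemma uf_iInter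
    (hsub : ∀ A ∈ p, G A)
    (hUF : ∀ A, G A → (A ∈ p ↔ Aᶜ ∉ p))
    (hInter : ∀ A ∈ p, ∀ B ∈ p, A ∩ B ∈ p)
    (hSuper : ∀ A ∈ p, ∀ B, G B → A ⊆ B → B ∈ p)
    (hcompl : ∀ A, G A → G Aᶜ) (huniv : G Set.univ) :
    ∀ (n : ℕ) (f : Fin n → Set V), (∀ i, f i ∈ p) → (⋂ i, f i) ∈ p := by
  intro n
  induction n with
  | zero => intro f _; simpa using uf_univ hsub hUF hSuper hcompl huniv
  | succ n ih =>
    intro f hf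
    have : (⋂ i, f i) = f 0 ∩ ⋂ i : Fin n, f i.succ := by
      ext x; simp [Fin.forall_fin_succ]
    rw [this]
    exact hInter _ (hf 0) _ (ih _ fun i => hf i.succ)

end Helpers
/-- Symmetry of definitions: for ultrafilters `p` on the fiber algebra over `V` and
`q` on the dual fiber algebra over `W`, with defining sets `D_p = {b : R(·,b) ∈ p}`
and `D_q = {a : R(a,·) ∈ q}` lying in the respective algebras, `D_p ∈ q → D_q ∈ p`. -/
theorem symmetry_of_definitions {V W : Type*} (R : V → W → Prop) (k : ℕ)
    (hstable : ¬ OrderProperty R k)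
    (p : Set (Set V)) (q : Set (Set W))
    (hpsub : ∀ A ∈ p, GenAlg {S : Set V | ∃ b : W, S = {a | R a b}} A)
    (hpUF : ∀ A, GenAlg {S : Set V | ∃ b : W, S = {a | R a b}} A → (A ∈ p ↔ Aᶜ ∉ p))
    (hpInter : ∀ A ∈ p, ∀ B ∈ p, A ∩ B ∈ p)
    (hpSuper : ∀ A ∈ p, ∀ B, GenAlg {S : Set V | ∃ b : W, S = {a | R a b}} B →
      A ⊆ B → B ∈ p)
    (hqsub : ∀ A ∈ q, GenAlg {S : Set W | ∃ a : V, S = {b | R a b}} A)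
    (hqUF : ∀ A, GenAlg {S : Set W | ∃ a : V, S = {b | R a b}} A → (A ∈ q ↔ Aᶜ ∉ q))
    (hqInter : ∀ A ∈ q, ∀ B ∈ q, A ∩ B ∈ q)
    (hqSuper : ∀ A ∈ q, ∀ B, GenAlg {S : Set W | ∃ a : V, S = {b | R a b}} B →
      A ⊆ B → B ∈ q)
    (hDp : GenAlg {S : Set W | ∃ a : V, S = {b | R a b}} {b | {a | R a b} ∈ p})
    (hDq : GenAlg {S : Set V | ∃ b : W, S = {a | R a b}} {a | {b | R a b} ∈ q})
    (h : {b | {a | R a b} ∈ p} ∈ q) :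
    {a | {b | R a b} ∈ q} ∈ p := by
  by_contra hcon
  -- the complement of D_q is in p
  have hDqc : {a | {b | R a b} ∈ q}ᶜ ∈ p := by
    have := hpUF _ (GenAlg.compl _ hDq)
    rw [compl_compl] at this
    exact this.mpr hcon
  have hqcompl : ∀ A, GenAlg {S : Set W | ∃ a : V, S = {b | R a b}} A →
      GenAlg {S : Set W | ∃ a : V, S = {b | R a b}} Aᶜ := fun A hA => GenAlg.compl A hA
  have hpcompl : ∀ A, GenAlg {S : Set V | ∃ b : W, S = {a | R a b}} A →
      GenAlg {S : Set V | ∃ b : W, S = {a | R a b}} Aᶜ := fun A hA => GenAlg.compl A hA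
  -- main construction
  have key : ∀ n : ℕ, ∃ (a : Fin n → V) (b : Fin n → W),
      (∀ i j, R (a i) (b j) ↔ j ≤ i) ∧
      (∀ j, {x | R x (b j)} ∈ p) ∧
      (∀ i, {y | R (a i) y}ᶜ ∈ q) := by
    intro n
    induction n with
    | zero => exact ⟨Fin.elim0, Fin.elim0, fun i => i.elim0, fun j => j.elim0, fun i => i.elim0⟩
    | succ n ih =>
      obtain ⟨a, b, h1, h2, h3⟩ := ih
      -- choose b_n
      have hTb : {y | {x | R x y} ∈ p} ∩ ⋂ i : Fin n, {y | R (a i) y}ᶜ ∈ q :=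
        hqInter _ h _ (uf_iInter hqsub hqUF hqInter hqSuper hqcompl GenAlg.univ n _ h3)
      obtain ⟨bn, hbn1, hbn2⟩ := uf_nonempty hqsub hqUF hqSuper hqcompl hTb
      simp only [Set.mem_iInter, Set.mem_compl_iff, Set.mem_setOf_eq] at hbn2
      set b' : Fin (n + 1) → W := Fin.snoc b bn with hb'
      -- choose a_n
      have hmem : ∀ j : Fin (n + 1), {x | R x (b' j)} ∈ p := by
        intro j
        refine Fin.lastCases ?_ ?_ j
        · simpa [hb', Fin.snoc_last] using hbn1
        · intro j0; simpa [hb', Fin.snoc_castSucc] using h2 j0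
      have hTa : {x | {y | R x y} ∈ q}ᶜ ∩ ⋂ j : Fin (n + 1), {x | R x (b' j)} ∈ p :=
        hpInter _ hDqc _ (uf_iInter hpsub hpUF hpInter hpSuper hpcompl GenAlg.univ _ _ hmem)
      obtain ⟨an, han1, han2⟩ := uf_nonempty hpsub hpUF hpSuper hpcompl hTa
      simp only [Set.mem_iInter, Set.mem_compl_iff, Set.mem_setOf_eq] at han1 han2
      set a' : Fin (n + 1) → V := Fin.snoc a an with ha'
      refine ⟨a', b', ?_, hmem, ?_⟩
      · intro i j
        refine Fin.lastCases ?_ ?_ i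
        · simp only [ha', Fin.snoc_last]
          constructor
          · intro _; exact Fin.le_last j
          · intro _; exact han2 j
        · intro i0
          refine Fin.lastCases ?_ ?_ j
          · simp only [ha', hb', Fin.snoc_last, Fin.snoc_castSucc]
            constructor
            · intro hr; exact absurd hr (hbn2 i0)
            · intro hle; exact absurd hle (Fin.castSucc_lt_last i0).not_ge
          · intro j0
            simp only [ha', hb', Fin.snoc_castSucc]
            rw [h1 i0 j0, Fin.castSucc_le_castSucc_iff]
      · intro i
        refine Fin.lastCases ?_ ?_ i
        · simp only [ha', Fin.snoc_last]
          have hG : GenAlg {S : Set W | ∃ a : V, S = {b | R a b}} {y | R an y} :=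
            GenAlg.basic _ ⟨an, rfl⟩
          have := hqUF _ (GenAlg.compl _ hG)
          rw [compl_compl] at this
          exact this.mpr han1
        · intro i0; simpa [ha', Fin.snoc_castSucc] using h3 i0
  obtain ⟨a, b, h1, _, _⟩ := key k
  exact hstable ⟨fun i => a i.rev, fun j => b j.rev, fun i j => by
    rw [h1]; exact Fin.rev_le_rev⟩
end
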